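/- Let M = N ×_f N_T be a warped product submanifold of an almost contact metric manifold with ξ tangent to the first factor N. Then for every X tangent to N and Z, W tangent to N_T: g(𝒫_X Z, W) = 0, where 𝒫_X Y denotes the tangential component of (∇̃_X φ)Y. -/

import Mathlib

/-- Abstract model of an isometrically immersed (doubly/singly) warped product
submanifold `M = N₁ ×_f N₂` of an almost contact metric manifold
`(M̃, φ, ξ, η, g̃)`, at the level of vector fields along `M`.  `F` plays the
role of the ring of smooth functions, `V` the module of ambient vector fields
along `M`; `act X a` is the derivative `X(a)`; `nab` is the ambient Levi-Civita
connection `∇̃`, `nabM` the induced connection `∇` on `M` and `h` the second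
fundamental form (Gauss formula `∇̃_X Y = ∇_X Y + h(X,Y)`); `Tang` is the
space of vector fields tangent to `M`, `D1`, `D2` those tangent to the factors
`N₁`, `N₂`; `P X`/`Fn X` are the tangential/normal parts of `φX` for `X`
tangent to `M`, and `Pc U W`/`Qc U W` the tangential/normal parts
`𝒫_U W`/`𝒬_U W` of `(∇̃_U φ) W = ∇̃_U (φW) − φ (∇̃_U W)`.  `η` is given by
`η(X) = g̃(X, ξ)`. -/
structure ContactWarpedSetting (F : Type*) (V : Type*) [CommRing F]
    [AddCommGroup V] [Module F V] where
  g : V →ₗ[F] V →ₗ[F] F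
  g_symm : ∀ X Y, g X Y = g Y X
  act : V → F → F
  act_add : ∀ X a b, act X (a + b) = act X a + act X b
  act_mul : ∀ X a b, act X (a * b) = a * act X b + b * act X a
  nab : V → V → V
  nab_metric : ∀ X Y Z, act X (g Y Z) = g (nab X Y) Z + g Y (nab X Z)
  phi : V →ₗ[F] V
  xi : V
  phi_phi : ∀ X, phi (phi X) = -X + (g X xi) • xi
  phi_xi : phi xi = 0
  g_xixi : g xi xi = 1
  phi_compat : ∀ X Y, g (phi X) (phi Y) = g X Y - (g X xi) * (g Y xi)
  Tang : Submodule F V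
  D1 : Submodule F V
  D2 : Submodule F V
  D1_le : D1 ≤ Tang
  D2_le : D2 ≤ Tang
  ortho : ∀ X ∈ D1, ∀ Z ∈ D2, g X Z = 0
  nabM : V → V → V
  nabM_tang : ∀ X Y, nabM X Y ∈ Tang
  h : V → V → V
  h_symm : ∀ X Y, h X Y = h Y X
  h_normal : ∀ X Y, ∀ T ∈ Tang, g (h X Y) T = 0
  gauss : ∀ X ∈ Tang, ∀ Y ∈ Tang, nab X Y = nabM X Y + h X Y
  P : V → V
  Fn : V → V
  phi_decomp : ∀ X ∈ Tang, phi X = P X + Fn X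
  P_tang : ∀ X, P X ∈ Tang
  Fn_normal : ∀ X, ∀ T ∈ Tang, g (Fn X) T = 0
  Pc : V → V → V
  Qc : V → V → V
  Pc_tang : ∀ U W, Pc U W ∈ Tang
  Qc_normal : ∀ U W, ∀ T ∈ Tang, g (Qc U W) T = 0
  cov_decomp : ∀ U ∈ Tang, ∀ W ∈ Tang,
    nab U (phi W) - phi (nab U W) = Pc U W + Qc U W

/-!
Since `φ` is skew-adjoint, `g((∇̃_X φ)Z, W) = g(∇̃_X φZ, W) + g(∇̃_X Z, φW)`. As `N_T` is invariant,
`φZ` and `φW` are again tangent to `N_T`, so by the Gauss formula and `∇_X Z = (X ln f) Z` the two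
terms are `(X ln f) g(φZ, W)` and `(X ln f) g(Z, φW)`, which cancel.
-/

namespace ContactWarpedSetting

variable {F V : Type*} [CommRing F] [AddCommGroup V] [Module F V] (S : ContactWarpedSetting F V)

theorem g_phi_xi (Y : V) : S.g (S.phi Y) S.xi = 0 := by
  have h : (S.g (S.phi Y) S.xi) • S.xi = 0 := by
    have hφφφ := S.phi_phi (S.phi Y)
    rw [S.phi_phi Y, map_add, map_neg, map_smul, S.phi_xi, smul_zero, add_zero] at hφφφ
    exact left_eq_add.mp hφφφ
  simpa [S.g_xixi] using congrArg (fun v => S.g v S.xi) h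

theorem g_phi_left (X Y : V) : S.g (S.phi X) Y = -S.g X (S.phi Y) := by
  have h := S.phi_compat X (S.phi Y)
  simp only [S.phi_phi Y, S.g_phi_xi, map_add, map_neg, map_smul, smul_eq_mul, mul_zero,
    sub_zero] at h
  linear_combination -h

theorem g_nab_of_mem_tang {X Y T : V} (hX : X ∈ S.Tang) (hY : Y ∈ S.Tang) (hT : T ∈ S.Tang) :
    S.g (S.nab X Y) T = S.g (S.nabM X Y) T := by
  rw [S.gauss X hX Y hY, map_add, LinearMap.add_apply, S.h_normal X Y T hT, add_zero]

theorem g_Pc_of_mem_tang {U W T : V} (hU : U ∈ S.Tang) (hW : W ∈ S.Tang) (hT : T ∈ S.Tang) :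
    S.g (S.Pc U W) T = S.g (S.nab U (S.phi W)) T - S.g (S.phi (S.nab U W)) T := by
  have h := congrArg (fun v => S.g v T) (S.cov_decomp U hU W hW)
  simp only [map_sub, map_add, LinearMap.sub_apply, LinearMap.add_apply,
    S.Qc_normal U W T hT, add_zero] at h
  exact h.symm

end ContactWarpedSetting

theorem jop_i_general {F V : Type*} [CommRing F] [AddCommGroup V] [Module F V]
    (S : ContactWarpedSetting F V)
    (dlf : V → F)
    (warp : ∀ X ∈ S.D1, ∀ Z ∈ S.D2, S.nabM X Z = dlf X • Z)
    (inv2 : ∀ Z ∈ S.D2, S.phi Z ∈ S.D2) :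
    ∀ X ∈ S.D1, ∀ Z ∈ S.D2, ∀ W ∈ S.D2, S.g (S.Pc X Z) W = 0 := by
  intro X hX Z hZ W hW
  have hXT := S.D1_le hX
  have hZT := S.D2_le hZ
  have hWT := S.D2_le hW
  have hφZT := S.D2_le (inv2 Z hZ)
  have hφWT := S.D2_le (inv2 W hW)
  rw [S.g_Pc_of_mem_tang hXT hZT hWT, S.g_nab_of_mem_tang hXT hφZT hWT, S.g_phi_left,
    S.g_nab_of_mem_tang hXT hZT hφWT, warp X hX _ (inv2 Z hZ), warp X hX Z hZ]
  simp only [map_smul, LinearMap.smul_apply, smul_eq_mul, S.g_phi_left]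
  ring

theorem jop_i {F V : Type*} [CommRing F] [AddCommGroup V] [Module F V]
    (S : ContactWarpedSetting F V)
    (hxi : S.xi ∈ S.D1)
    (dlf : V → F)
    (warp : ∀ X ∈ S.D1, ∀ Z ∈ S.D2, S.nabM X Z = dlf X • Z)
    (warp' : ∀ X ∈ S.D1, ∀ Z ∈ S.D2, S.nabM Z X = dlf X • Z)
    (inv2 : ∀ Z ∈ S.D2, S.phi Z ∈ S.D2) :
    ∀ X ∈ S.D1, ∀ Z ∈ S.D2, ∀ W ∈ S.D2, S.g (S.Pc X Z) W = 0 :=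
  jop_i_general S dlf warp inv2
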